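/- Let (i,j) be an isoclinism between groups G1 (with center Z1) and G2 (with center Z2). Let g1 ∈ G1 and g2 ∈ G2 be elements satisfying g2 Z2 = i(g1 Z1). Then the centralizers Z_{G1}(g1) and Z_{G2}(g2) are isoclinic. -/

import Mathlib

open scoped commutatorElement

/-- Two groups `G₁`, `G₂` with centers `Z₁`, `Z₂` are *isoclinic* if there are
isomorphisms `i : G₁/Z₁ ≃ G₂/Z₂` and `j : [G₁,G₁] ≃ [G₂,G₂]` compatible with the
commutator maps: whenever `x'Z₂ = i(xZ₁)` and `y'Z₂ = i(yZ₁)` one has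
`j([x,y]) = [x',y']`. -/
def IsIsoclinic (G₁ G₂ : Type*) [Group G₁] [Group G₂] : Prop :=
  ∃ (i : (G₁ ⧸ Subgroup.center G₁) ≃* (G₂ ⧸ Subgroup.center G₂))
    (j : commutator G₁ ≃* commutator G₂),
    ∀ (x y : G₁) (x' y' : G₂),
      (QuotientGroup.mk x' : G₂ ⧸ Subgroup.center G₂) = i (QuotientGroup.mk x) →
      (QuotientGroup.mk y' : G₂ ⧸ Subgroup.center G₂) = i (QuotientGroup.mk y) →
      (j ⟨⁅x, y⁆, Subgroup.commutator_mem_commutator (Subgroup.mem_top x)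
          (Subgroup.mem_top y)⟩ : G₂) = ⁅x', y'⁆

/-!
An isoclinism relates commuting pairs to commuting pairs: if `x'Z₂ = i(xZ₁)` and `y'Z₂ = i(yZ₁)`
then `[x', y'] = j([x, y])`, which is trivial exactly when `[x, y]` is. Hence `i` matches
`Z_{G₁}(g₁)` with `Z_{G₂}(g₂)`, and then also their centers. Both centralizers are quotients of the
group `P` of related pairs in `Z_{G₁}(g₁) × Z_{G₂}(g₂)`: the two projections have the same kernel
modulo the centers, which gives the isomorphism of central quotients, and `[P, P]` lies in the
graph of `j`, so on `[P, P]` they have the same (trivial) kernel, which gives the isomorphism of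
derived subgroups.
-/

section

open Subgroup Function QuotientGroup

section Commutator

variable {G : Type*} [Group G]

theorem commutatorElement_mul_mem_center_left {z : G} (hz : z ∈ center G) (a b : G) :
    ⁅a * z, b⁆ = ⁅a, b⁆ := by
  rw [commutatorElement_mul_left_eq_conj_mul,
    commutatorElement_eq_one_iff_mul_comm.mpr (mem_center_iff.mp hz b).symm]
  group

theorem commutatorElement_mul_mem_center_right {z : G} (hz : z ∈ center G) (a b : G) :
    ⁅a, b * z⁆ = ⁅a, b⁆ := by
  rw [← commutatorElement_inv, commutatorElement_mul_mem_center_left hz, commutatorElement_inv]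

theorem commutatorElement_eq_of_mk_eq {a a' b b' : G}
    (ha : (a : G ⧸ center G) = a') (hb : (b : G ⧸ center G) = b') : ⁅a, b⁆ = ⁅a', b'⁆ := by
  rw [← mul_inv_cancel_left a a', ← mul_inv_cancel_left b b',
    commutatorElement_mul_mem_center_left (QuotientGroup.eq.mp ha),
    commutatorElement_mul_mem_center_right (QuotientGroup.eq.mp hb)]

end Commutator

namespace MonoidHom

variable {P A B : Type*} [Group P] [Group A] [Group B]

noncomputable def mulEquivOfKerEq (f : P →* A) (g : P →* B) (hf : Surjective f)
    (hg : Surjective g) (h : f.ker = g.ker) : A ≃* B :=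
  (quotientKerEquivOfSurjective f hf).symm.trans
    ((quotientMulEquivOfEq h).trans (quotientKerEquivOfSurjective g hg))

@[simp]
theorem mulEquivOfKerEq_apply {f : P →* A} {g : P →* B} (hf : Surjective f)
    (hg : Surjective g) (h : f.ker = g.ker) (p : P) :
    mulEquivOfKerEq f g hf hg h (f p) = g p := by
  have hp : (quotientKerEquivOfSurjective f hf).symm (f p) = p :=
    (MulEquiv.symm_apply_eq _).mpr rfl
  rw [mulEquivOfKerEq, MulEquiv.trans_apply, MulEquiv.trans_apply, hp, quotientMulEquivOfEq_mk]
  rfl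

theorem map_mem_commutator (f : P →* A) {p : P} (hp : p ∈ _root_.commutator P) :
    f p ∈ _root_.commutator A :=
  commutator_mono le_top le_top (map_commutator_eq P f ▸ mem_map_of_mem f hp)

def commutatorRestrict (f : P →* A) : _root_.commutator P →* _root_.commutator A :=
  (f.comp (_root_.commutator P).subtype).codRestrict _ fun p => f.map_mem_commutator p.2

theorem commutatorRestrict_surjective {f : P →* A} (hf : Surjective f) :
    Surjective f.commutatorRestrict := by
  rintro ⟨a, ha⟩
  rw [_root_.commutator_def, ← map_top_of_surjective f hf, ← map_commutator] at ha
  obtain ⟨p, hp, rfl⟩ := ha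
  exact ⟨⟨p, hp⟩, rfl⟩

end MonoidHom

open MonoidHom in
theorem IsIsoclinic.of_surjective {P A B : Type*} [Group P] [Group A] [Group B]
    (f : P →* A) (g : P →* B) (hf : Surjective f) (hg : Surjective g)
    (hcenter : ∀ p, f p ∈ center A ↔ g p ∈ center B)
    (hcomm : ∀ p ∈ commutator P, f p = 1 ↔ g p = 1) : IsIsoclinic A B := by
  have hkerZ : ((mk' (center A)).comp f).ker = ((mk' (center B)).comp g).ker := by
    ext p
    simpa [mem_ker] using hcenter p
  have hkerC : f.commutatorRestrict.ker = g.commutatorRestrict.ker := by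
    ext p
    rw [mem_ker, mem_ker, ← OneMemClass.coe_eq_one, ← OneMemClass.coe_eq_one]
    exact hcomm p p.2
  let i := mulEquivOfKerEq ((mk' (center A)).comp f) ((mk' (center B)).comp g)
    ((mk'_surjective _).comp hf) ((mk'_surjective _).comp hg) hkerZ
  have hi (p : P) : i (f p) = g p := mulEquivOfKerEq_apply _ _ hkerZ p
  refine ⟨i, mulEquivOfKerEq _ _ (commutatorRestrict_surjective hf)
    (commutatorRestrict_surjective hg) hkerC, fun x y x' y' hx hy => ?_⟩
  obtain ⟨p, rfl⟩ := hf x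
  obtain ⟨q, rfl⟩ := hf y
  have hpq : (⟨⁅f p, f q⁆, commutator_mem_commutator (mem_top _) (mem_top _)⟩ : commutator A) =
      f.commutatorRestrict ⟨⁅p, q⁆, commutator_mem_commutator (mem_top p) (mem_top q)⟩ :=
    Subtype.ext (map_commutatorElement f p q).symm
  rw [hpq, mulEquivOfKerEq_apply]
  exact (map_commutatorElement g p q).trans
    (commutatorElement_eq_of_mk_eq (hi p ▸ hx).symm (hi q ▸ hy).symm)

def IsIsoclinism {G₁ G₂ : Type*} [Group G₁] [Group G₂]
    (i : (G₁ ⧸ center G₁) ≃* (G₂ ⧸ center G₂)) (j : commutator G₁ ≃* commutator G₂) : Prop :=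
  ∀ (x y : G₁) (x' y' : G₂), (x' : G₂ ⧸ center G₂) = i x → (y' : G₂ ⧸ center G₂) = i y →
    (j ⟨⁅x, y⁆, commutator_mem_commutator (mem_top x) (mem_top y)⟩ : G₂) = ⁅x', y'⁆

variable {G₁ G₂ : Type*} [Group G₁] [Group G₂]

def centerQuotientGraph (i : (G₁ ⧸ center G₁) ≃* (G₂ ⧸ center G₂)) : Subgroup (G₁ × G₂) :=
  MonoidHom.eqLocus ((mk' (center G₂)).comp (MonoidHom.snd G₁ G₂))
    ((i : (G₁ ⧸ center G₁) →* (G₂ ⧸ center G₂)).comp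
      ((mk' (center G₁)).comp (MonoidHom.fst G₁ G₂)))

def commutatorGraph (j : commutator G₁ ≃* commutator G₂) : Subgroup (G₁ × G₂) :=
  (j : commutator G₁ →* commutator G₂).graph.map
    ((commutator G₁).subtype.prodMap (commutator G₂).subtype)

namespace IsIsoclinism

variable {i : (G₁ ⧸ center G₁) ≃* (G₂ ⧸ center G₂)} {j : commutator G₁ ≃* commutator G₂}

theorem commute_iff (hij : IsIsoclinism i j) {x y : G₁} {x' y' : G₂}
    (hx : (x' : G₂ ⧸ center G₂) = i x) (hy : (y' : G₂ ⧸ center G₂) = i y) :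
    Commute x y ↔ Commute x' y' := by
  rw [← commutatorElement_eq_one_iff_commute, ← commutatorElement_eq_one_iff_commute,
    ← hij x y x' y' hx hy, OneMemClass.coe_eq_one, MulEquiv.map_eq_one_iff, ← Subtype.val_inj]
  rfl

theorem commutator_le_commutatorGraph (hij : IsIsoclinism i j) :
    ⁅centerQuotientGraph i, centerQuotientGraph i⁆ ≤ commutatorGraph j :=
  commutator_le.mpr fun p hp q hq =>
    ⟨(⟨⁅p.1, q.1⁆, _⟩, j ⟨⁅p.1, q.1⁆, _⟩), rfl, Prod.ext rfl (hij p.1 q.1 p.2 q.2 hp hq)⟩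

theorem fst_eq_one_iff_of_mem_commutatorGraph {p : G₁ × G₂} (hp : p ∈ commutatorGraph j) :
    p.1 = 1 ↔ p.2 = 1 := by
  obtain ⟨⟨c, d⟩, rfl : j c = d, rfl⟩ := hp
  simp

theorem mem_center_iff (hij : IsIsoclinism i j) {H₁ : Subgroup G₁} {H₂ : Subgroup G₂}
    (hH : ∀ (x : G₁) (x' : G₂), (x' : G₂ ⧸ center G₂) = i x → (x ∈ H₁ ↔ x' ∈ H₂))
    {x : H₁} {x' : H₂}
    (hx : ((x' : G₂) : G₂ ⧸ center G₂) = i (x : G₁)) : x ∈ center H₁ ↔ x' ∈ center H₂ := by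
  simp only [Subgroup.mem_center_iff, ← Subtype.val_inj, coe_mul]
  constructor
  · rintro h ⟨y', hy'⟩
    obtain ⟨y, hy⟩ := mk_surjective (i.symm y')
    rw [MulEquiv.eq_symm_apply] at hy
    exact (hij.commute_iff hy.symm hx).mp (h ⟨y, (hH y y' hy.symm).mpr hy'⟩)
  · rintro h ⟨y, hy⟩
    obtain ⟨y', hy'⟩ := mk_surjective (i y)
    exact (hij.commute_iff hy' hx).mpr (h ⟨y', (hH y y' hy').mp hy⟩)

theorem isIsoclinic_of_mem_iff (hij : IsIsoclinism i j) {H₁ : Subgroup G₁} {H₂ : Subgroup G₂}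
    (hH : ∀ (x : G₁) (x' : G₂), (x' : G₂ ⧸ center G₂) = i x → (x ∈ H₁ ↔ x' ∈ H₂)) :
    IsIsoclinic H₁ H₂ := by
  let P := (centerQuotientGraph i).comap (H₁.subtype.prodMap H₂.subtype)
  let Φ := (H₁.subtype.prodMap H₂.subtype).comp P.subtype
  refine IsIsoclinic.of_surjective ((MonoidHom.fst H₁ H₂).comp P.subtype)
    ((MonoidHom.snd H₁ H₂).comp P.subtype) ?_ ?_ ?_ ?_
  · rintro ⟨x, hx⟩
    obtain ⟨x', hx'⟩ := mk_surjective (i x)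
    exact ⟨⟨(⟨x, hx⟩, ⟨x', (hH x x' hx').mp hx⟩), hx'⟩, rfl⟩
  · rintro ⟨x', hx'⟩
    obtain ⟨x, hx⟩ := mk_surjective (i.symm x')
    rw [MulEquiv.eq_symm_apply] at hx
    exact ⟨⟨(⟨x, (hH x x' hx.symm).mpr hx'⟩, ⟨x', hx'⟩), hx.symm⟩, rfl⟩
  · intro p
    exact hij.mem_center_iff hH p.2
  · intro p hp
    have hrange : Φ.range ≤ centerQuotientGraph i := by
      rintro _ ⟨p, rfl⟩
      exact p.2
    have hΦp : Φ p ∈ commutatorGraph j :=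
      hij.commutator_le_commutatorGraph <| commutator_mono hrange hrange <|
        map_commutator_eq P Φ ▸ mem_map_of_mem Φ hp
    rw [← OneMemClass.coe_eq_one, ← OneMemClass.coe_eq_one]
    exact fst_eq_one_iff_of_mem_commutatorGraph hΦp

end IsIsoclinism

end

/-- Let `(i,j)` be an isoclinism between groups `G₁` (with center `Z₁`)
and `G₂` (with center `Z₂`), and let `g₁ ∈ G₁` and `g₂ ∈ G₂` be elements satisfying
`g₂Z₂ = i(g₁Z₁)`.  Then the centralizers `Z_{G₁}(g₁)` and `Z_{G₂}(g₂)` are isoclinic. -/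
theorem centralizers_isoclinic
    (G₁ G₂ : Type*) [Group G₁] [Group G₂]
    (i : (G₁ ⧸ Subgroup.center G₁) ≃* (G₂ ⧸ Subgroup.center G₂))
    (j : commutator G₁ ≃* commutator G₂)
    (hij : ∀ (x y : G₁) (x' y' : G₂),
      (QuotientGroup.mk x' : G₂ ⧸ Subgroup.center G₂) = i (QuotientGroup.mk x) →
      (QuotientGroup.mk y' : G₂ ⧸ Subgroup.center G₂) = i (QuotientGroup.mk y) →
      (j ⟨⁅x, y⁆, Subgroup.commutator_mem_commutator (Subgroup.mem_top x)
          (Subgroup.mem_top y)⟩ : G₂) = ⁅x', y'⁆)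
    (g₁ : G₁) (g₂ : G₂)
    (hg : (QuotientGroup.mk g₂ : G₂ ⧸ Subgroup.center G₂) = i (QuotientGroup.mk g₁)) :
    IsIsoclinic ↥(Subgroup.centralizer {g₁}) ↥(Subgroup.centralizer {g₂}) := by
  have hij : IsIsoclinism i j := hij
  refine hij.isIsoclinic_of_mem_iff fun x x' hx => ?_
  rw [Subgroup.mem_centralizer_singleton_iff, Subgroup.mem_centralizer_singleton_iff]
  exact hij.commute_iff hx hg
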